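/- arXiv:1606.07778 — 2 statements merged into one kernel-verified Lean document; each statement's English description precedes it below -/
import Mathlib

section
/- Let G be a Garside group, u, v ∈ G⁰ with r = sup(u) ≥ 1, and for 0 ≤ k ≤ r let ι_k (resp. φ_k) be the product of the leftmost (resp. rightmost) k factors of the right normal form of u. If inf(uv) = k, then ι_{r−k} ≼ uv·Δ^{−k}. -/
/-- A finite-type Garside structure on a group `G`. -/
structure GarsideStructure (G : Type*) [Group G] where
  /-- the submonoid of positive elements -/
  P : Submonoid G
  /-- the Garside element -/
  Δ : G
  delta_pos : Δ ∈ P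
  pos_antisymm : ∀ x : G, x ∈ P → x⁻¹ ∈ P → x = 1
  /-- gcd for the prefix order -/
  wedge : G → G → G
  /-- lcm for the prefix order -/
  vee : G → G → G
  wedge_le_left : ∀ x y, (wedge x y)⁻¹ * x ∈ P
  wedge_le_right : ∀ x y, (wedge x y)⁻¹ * y ∈ P
  le_wedge : ∀ x y z, z⁻¹ * x ∈ P → z⁻¹ * y ∈ P → z⁻¹ * wedge x y ∈ P
  left_le_vee : ∀ x y, x⁻¹ * vee x y ∈ P
  right_le_vee : ∀ x y, y⁻¹ * vee x y ∈ P
  vee_le : ∀ x y z, x⁻¹ * z ∈ P → y⁻¹ * z ∈ P → (vee x y)⁻¹ * z ∈ P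
  /-- gcd for the suffix order -/
  rwedge : G → G → G
  /-- lcm for the suffix order -/
  rvee : G → G → G
  rwedge_le_left : ∀ x y, x * (rwedge x y)⁻¹ ∈ P
  rwedge_le_right : ∀ x y, y * (rwedge x y)⁻¹ ∈ P
  le_rwedge : ∀ x y z, x * z⁻¹ ∈ P → y * z⁻¹ ∈ P → rwedge x y * z⁻¹ ∈ P
  left_le_rvee : ∀ x y, rvee x y * x⁻¹ ∈ P
  right_le_rvee : ∀ x y, rvee x y * y⁻¹ ∈ P
  rvee_le : ∀ x y z, z * x⁻¹ ∈ P → z * y⁻¹ ∈ P → z * (rvee x y)⁻¹ ∈ P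
  /-- the set of simple elements is finite -/
  simples_finite : {s : G | s ∈ P ∧ s⁻¹ * Δ ∈ P}.Finite
  /-- the simple elements generate the group -/
  simples_generate : Subgroup.closure {s : G | s ∈ P ∧ s⁻¹ * Δ ∈ P} = ⊤
  /-- conjugation by `Δ` preserves `P` -/
  conj_delta : ∀ x : G, x ∈ P ↔ Δ⁻¹ * x * Δ ∈ P
  /-- `P` is noetherian -/
  noetherian : ∀ x ∈ P, x ≠ 1 →
    ∃ N : ℕ, ∀ l : List G, (∀ a ∈ l, a ∈ P ∧ a ≠ 1) → l.prod = x → l.length ≤ N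

namespace GarsideStructure

variable {G : Type*} [Group G] (g : GarsideStructure G)

/-- the prefix order -/
def le (x y : G) : Prop := x⁻¹ * y ∈ g.P

/-- the suffix order: `rle x y` means `x ≽ y`, i.e. `y` is a suffix of `x` -/
def rle (x y : G) : Prop := x * y⁻¹ ∈ g.P

/-- `IsInf x k` : `k` is the infimum of `x`, `max {j : Δ^j ≼ x}` -/
def IsInf (x : G) (k : ℤ) : Prop := g.le (g.Δ ^ k) x ∧ ∀ j : ℤ, g.le (g.Δ ^ j) x → j ≤ k

/-- `IsSup x k` : `k` is the supremum of `x`, `min {j : x ≼ Δ^j}` -/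
def IsSup (x : G) (k : ℤ) : Prop := g.le x (g.Δ ^ k) ∧ ∀ j : ℤ, g.le x (g.Δ ^ j) → k ≤ j

/-- an element of a Garside group is absorbable -/
def Absorbable (y : G) : Prop :=
  (g.IsInf y 0 ∨ g.IsSup y 0) ∧
  ∃ (x : G) (i s : ℤ), g.IsInf x i ∧ g.IsSup x s ∧ g.IsInf (x * y) i ∧ g.IsSup (x * y) s

/-- simple elements: positive prefixes of `Δ` -/
def Simple (s : G) : Prop := s ∈ g.P ∧ g.le s g.Δ

/-- atoms: minimal nontrivial positive elements -/
def Atom (a : G) : Prop := a ∈ g.P ∧ a ≠ 1 ∧ ∀ u v : G, u ∈ g.P → v ∈ g.P → u * v = a → u = 1 ∨ v = 1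

/-- `(s,t)` is left-weighted: `∂s ∧ t = 1` -/
def LeftWeighted (s t : G) : Prop :=
  g.Simple s ∧ g.Simple t ∧ g.wedge (s⁻¹ * g.Δ) t = 1

/-- `(s,t)` is right-weighted: `s ∧^Lsh ∂⁻¹t = 1` -/
def RightWeighted (s t : G) : Prop :=
  g.Simple s ∧ g.Simple t ∧ g.rwedge s (g.Δ * t⁻¹) = 1

/-- `l` is the left normal form (of the element `l.prod`, which has infimum `0`) -/
def IsLNF (l : List G) : Prop :=
  (∀ s ∈ l, g.Simple s ∧ s ≠ 1) ∧ l.Chain' g.LeftWeighted ∧ ∀ h ∈ l.head?, h ≠ g.Δ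

/-- `l` is the right normal form, written in product order (`u = s'_r ⋯ s'_1` corresponds
to the list `[s'_r, …, s'_1]`); the last pair condition says `s'_1 ≠ Δ`. -/
def IsRNF (l : List G) : Prop :=
  (∀ s ∈ l, g.Simple s ∧ s ≠ 1) ∧ l.Chain' g.RightWeighted ∧ ∀ h ∈ l.getLast?, h ≠ g.Δ

/-- the vertex set of the additional length graph: left cosets `gΔ^ℤ` -/
abbrev ALVertex := G ⧸ Subgroup.zpowers g.Δ

/-- one coset can be reached from the other by multiplying the distinguished
representative by a nontrivial proper simple element or by an absorbable element -/
def ALStep (v w : G ⧸ Subgroup.zpowers g.Δ) : Prop :=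
  ∃ d : G, g.IsInf d 0 ∧ (d : G ⧸ Subgroup.zpowers g.Δ) = v ∧
    ((∃ s : G, g.Simple s ∧ s ≠ 1 ∧ s ≠ g.Δ ∧ ((d * s : G) : G ⧸ Subgroup.zpowers g.Δ) = w) ∨
     (∃ y : G, g.Absorbable y ∧ ((d * y : G) : G ⧸ Subgroup.zpowers g.Δ) = w))

/-- the additional length graph -/
def ALGraph : SimpleGraph (G ⧸ Subgroup.zpowers g.Δ) where
  Adj v w := v ≠ w ∧ (g.ALStep v w ∨ g.ALStep w v)
  symm := by refine ⟨?_⟩; intro v w h; exact ⟨Ne.symm h.1, h.2.symm⟩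
  loopless := by refine ⟨?_⟩; intro v h; exact h.1 rfl

end GarsideStructure

/-!
Start from `ι_r = u ≼ u v` and strip off, `k` times, the last factor of `ι` on the left and one
`Δ` on the right. A step is possible because the last factor `s` of a right-weighted word is the
greatest simple suffix of its product: if `Δ` is a suffix of `ι z` with `z` positive, it is
already a suffix of `s z`. The `k` steps are available because `Δ^k ≼ u v` makes `Δ^k` a
suffix of `u v` as well.
-/

namespace GarsideStructure

variable {G : Type*} [Group G] {g : GarsideStructure G}

theorem delta_conj_mem {x : G} (hx : x ∈ g.P) : g.Δ * x * g.Δ⁻¹ ∈ g.P :=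
  (g.conj_delta _).mpr (by simpa [mul_assoc] using hx)

theorem delta_zpow_conj_mem (m : ℤ) {x : G} (hx : x ∈ g.P) :
    g.Δ ^ m * x * g.Δ ^ (-m) ∈ g.P := by
  induction m using Int.induction_on with
  | zero => simpa using hx
  | succ n ih =>
    convert delta_conj_mem ih using 1
    group
  | pred n ih =>
    convert (g.conj_delta _).mp ih using 1
    group

theorem rle_delta_zpow_of_le {x : G} {k : ℤ} (h : g.le (g.Δ ^ k) x) : g.rle x (g.Δ ^ k) := by
  unfold rle
  convert delta_zpow_conj_mem k h using 1
  group

/-- With `c` the least common multiple of `b` and `Δ` for the suffix order, `c * b⁻¹` is a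
common suffix of `a` and `Δ`. -/
theorem rle_rwedge_delta_mul {a b : G} (ha : a ∈ g.P) (hb : b ∈ g.P)
    (h : g.rle (a * b) g.Δ) : g.rle (g.rwedge a g.Δ * b) g.Δ := by
  have hab : g.rle (a * b) (g.rvee b g.Δ) := g.rvee_le _ _ _ (by simpa using ha) h
  have hΔb : g.rle (g.Δ * b) (g.rvee b g.Δ) :=
    g.rvee_le _ _ _ (by simpa using g.delta_pos) (delta_conj_mem hb)
  have hc := g.right_le_rvee b g.Δ
  generalize g.rvee b g.Δ = c at hab hΔb hc
  unfold rle at *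
  have hsuffix : g.rwedge a g.Δ * (c * b⁻¹)⁻¹ ∈ g.P :=
    g.le_rwedge _ _ _ (by simpa [mul_assoc] using hab) (by simpa [mul_assoc] using hΔb)
  convert g.P.mul_mem hsuffix hc using 1
  group

theorem RightWeighted.rwedge_mul_delta {s₂ s₁ : G} (h : g.RightWeighted s₂ s₁) :
    g.rwedge (s₂ * s₁) g.Δ = s₁ := by
  obtain ⟨hs₂, hs₁, hw⟩ := h
  have hs₁Δ : g.Δ * s₁⁻¹ ∈ g.P := by
    convert delta_conj_mem hs₁.2 using 1
    group
  have ht := g.le_rwedge (s₂ * s₁) g.Δ s₁ (by simpa using hs₂.1) hs₁Δ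
  have hleft := g.rwedge_le_left (s₂ * s₁) g.Δ
  have hright := g.rwedge_le_right (s₂ * s₁) g.Δ
  generalize g.rwedge (s₂ * s₁) g.Δ = t at ht hleft hright ⊢
  have hinv : (t * s₁⁻¹)⁻¹ ∈ g.P := by
    have h := g.le_rwedge s₂ (g.Δ * s₁⁻¹) (t * s₁⁻¹)
      (by convert hleft using 1; group) (by convert hright using 1; group)
    rwa [hw, one_mul] at h
  exact mul_inv_eq_one.mp (g.pos_antisymm _ ht hinv)

theorem RightWeighted.rle_delta_of_rle_mul {s₂ s₁ z : G} (h : g.RightWeighted s₂ s₁)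
    (hz : z ∈ g.P) (hΔ : g.rle (s₂ * s₁ * z) g.Δ) : g.rle (s₁ * z) g.Δ := by
  have h' := rle_rwedge_delta_mul (g.P.mul_mem h.1.1 h.2.1.1) hz hΔ
  rwa [h.rwedge_mul_delta] at h'

theorem rle_delta_of_isChain_append {m : List G} {s z : G}
    (hc : (m ++ [s]).IsChain g.RightWeighted) (hz : z ∈ g.P)
    (h : g.rle ((m ++ [s]).prod * z) g.Δ) : g.rle (s * z) g.Δ := by
  induction m using List.reverseRecOn generalizing s z with
  | nil => simpa using h
  | append_singleton m t ih =>
    have hts : g.RightWeighted t s :=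
      (List.isChain_append.mp hc).2.2 t (by rw [List.getLast?_concat]; rfl) s rfl
    have h' := ih (hc.prefix (List.prefix_append _ _)) (g.P.mul_mem hts.2.1.1 hz)
      (by simpa [mul_assoc] using h)
    exact hts.rle_delta_of_rle_mul hz (by rwa [mul_assoc])

theorem le_mul_delta_inv_of_isChain_append {m : List G} {s y : G}
    (hc : (m ++ [s]).IsChain g.RightWeighted) (hy : g.le (m ++ [s]).prod y)
    (hyΔ : g.rle y g.Δ) : g.le m.prod (y * g.Δ⁻¹) := by
  have h := rle_delta_of_isChain_append hc hy (by rwa [mul_inv_cancel_left])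
  unfold le rle at *
  convert h using 1
  simp [List.prod_append, mul_assoc]

theorem le_take_mul_delta_zpow_neg {l : List G} (hl : l.IsChain g.RightWeighted) {x : G}
    (hx : g.le l.prod x) :
    ∀ {j : ℕ}, g.rle x (g.Δ ^ (j : ℤ)) →
      g.le (l.take (l.length - j)).prod (x * g.Δ ^ (-(j : ℤ)))
  | 0, _ => by simpa using hx
  | j + 1, h => by
    unfold rle at h
    have ih := le_take_mul_delta_zpow_neg hl hx (j := j) <| by
      unfold rle
      convert g.P.mul_mem h g.delta_pos using 1
      group
    rcases Nat.lt_or_ge l.length (j + 1) with hlt | hle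
    · rw [Nat.sub_eq_zero_of_le hlt.le]
      simpa [le, ← zpow_neg] using h
    · obtain ⟨i, hi, hi'⟩ : ∃ i, l.length - (j + 1) = i ∧ l.length - j = i + 1 :=
        ⟨_, rfl, by omega⟩
      rw [hi', List.take_succ_eq_append_getElem (by omega)] at ih
      have hc := hl.prefix (List.take_prefix (i + 1) l)
      rw [List.take_succ_eq_append_getElem (by omega)] at hc
      have hx' : x * g.Δ ^ (-((j + 1 : ℕ) : ℤ)) = x * g.Δ ^ (-(j : ℤ)) * g.Δ⁻¹ := by
        push_cast
        group
      rw [hi, hx']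
      exact le_mul_delta_inv_of_isChain_append hc ih (by unfold rle; convert h using 1; group)

end GarsideStructure

theorem garside_leftmost_factors_prefix_general {G : Type*} [Group G] (g : GarsideStructure G)
    (u v : G) (hv : g.IsInf v 0)
    (l : List G) (hl : g.IsRNF l) (hlu : l.prod = u)
    (r : ℕ) (hr : l.length = r)
    (k : ℕ) (hk : g.IsInf (u * v) k) :
    g.le ((l.take (r - k)).prod) (u * v * g.Δ ^ (-(k : ℤ))) := by
  subst hlu hr
  exact GarsideStructure.le_take_mul_delta_zpow_neg hl.2.1
    (by simpa [GarsideStructure.le] using hv.1) (GarsideStructure.rle_delta_zpow_of_le hk.1)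

/-- Lemma "Lemma:Garside", second claim: if `u, v ∈ G⁰`, `r = sup(u) ≥ 1`, and `inf(uv) = k`,
then `ι_{r−k} ≼ uv·Δ^{−k}`, where `ι_j` is the product of the leftmost `j` factors of the
right normal form of `u`. -/
theorem garside_leftmost_factors_prefix {G : Type*} [Group G] (g : GarsideStructure G)
    (u v : G) (hu : g.IsInf u 0) (hv : g.IsInf v 0)
    (l : List G) (hl : g.IsRNF l) (hlu : l.prod = u)
    (r : ℕ) (hr : l.length = r) (hr1 : 1 ≤ r)
    (hsupu : g.IsSup u r)
    (k : ℕ) (hk : g.IsInf (u * v) k) :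
    g.le ((l.take (r - k)).prod) (u * v * g.Δ ^ (-(k : ℤ))) :=
  garside_leftmost_factors_prefix_general g u v hv l hl hlu r hr k hk
end

section
/- Let G be an irreducible Artin–Tits group of spherical type. Then G/Z(G) is not virtually cyclic. (Together with the existence of a WPD loxodromic element for the action on the hyperbolic graph 𝒞_AL(G), this yields that G/Z(G) is acylindrically hyperbolic.) -/
section Artin

/-- the alternating word `iji⋯` of length `m` in the free group -/
def braidWord {B : Type*} (i j : B) : ℕ → FreeGroup B
  | 0 => 1
  | n + 1 => FreeGroup.of i * braidWord j i n

/-- the braid relations associated to a Coxeter matrix -/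
def artinRelationsSet {B : Type*} (M : CoxeterMatrix B) : Set (FreeGroup B) :=
  {r | ∃ i j : B, i ≠ j ∧ r = braidWord i j (M i j) * (braidWord j i (M i j))⁻¹}

/-- the Artin–Tits group associated to a Coxeter matrix -/
abbrev ArtinGroup {B : Type*} (M : CoxeterMatrix B) : Type _ :=
  PresentedGroup (artinRelationsSet M)

/-- the Coxeter diagram: vertices are the generators, edges join `i ≠ j` with `m_{ij} ≥ 3`
(where `0` encodes `∞`) -/
def coxeterDiagram {B : Type*} (M : CoxeterMatrix B) : SimpleGraph B where
  Adj i j := i ≠ j ∧ M i j ≠ 2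
  symm := by refine ⟨?_⟩; intro i j h; exact ⟨h.1.symm, by rw [M.symmetric]; exact h.2⟩
  loopless := by refine ⟨?_⟩; intro i h; exact h.1 rfl

/-- an Artin–Tits group is irreducible if its Coxeter diagram is connected -/
def CoxeterMatrix.IsIrreducible {B : Type*} (M : CoxeterMatrix B) : Prop :=
  (coxeterDiagram M).Connected

/-- an Artin–Tits group is of spherical type if the associated Coxeter group is finite -/
def CoxeterMatrix.IsSpherical {B : Type*} (M : CoxeterMatrix B) : Prop :=
  Finite M.Group

/-- the Coxeter diagram has at least one edge (this excludes free abelian groups) -/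
def CoxeterMatrix.HasEdge {B : Type*} (M : CoxeterMatrix B) : Prop :=
  ∃ i j : B, i ≠ j ∧ 3 ≤ M i j

/-- `gs` is the classical Garside structure on the Artin–Tits group of `M`: the positive
monoid is generated by the standard generators, and `Δ` is their least common multiple
with respect to the prefix order. -/
structure IsClassicalGarside {B : Type*} (M : CoxeterMatrix B)
    (gs : GarsideStructure (ArtinGroup M)) : Prop where
  pos_eq : gs.P = Submonoid.closure (Set.range fun i => (PresentedGroup.of i : ArtinGroup M))
  le_delta : ∀ i : B, gs.le (PresentedGroup.of i) gs.Δ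
  delta_min : ∀ d : ArtinGroup M, d ∈ gs.P →
    (∀ i : B, gs.le (PresentedGroup.of i) d) → gs.le gs.Δ d

/-- the special element `x_G` of Proposition (Lox), together with its normal form data -/
structure GarsideStructure.SpecialElement {G : Type*} [Group G] (g : GarsideStructure G) where
  /-- the element itself -/
  x : G
  /-- the atom appearing as first and last normal form factor -/
  a : G
  /-- the atom whose complements appear as consecutive factors -/
  b : G
  /-- the common left and right normal form of `x` -/
  l : List G
  inf_zero : g.IsInf x 0
  atom_a : g.Atom a
  atom_b : g.Atom b
  lnf : g.IsLNF l
  rnf : g.IsRNF l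
  prod_eq : l.prod = x
  nonempty : l ≠ []
  head_a : l.head? = some a
  last_a : l.getLast? = some a
  /-- the first and last factors are the only ones consisting of a single atom -/
  interior_not_atom : ∀ s ∈ (l.drop 1).dropLast, ¬ g.Atom s
  /-- rigidity: the pair `(φ(x), ι(x)) = (a, a)` is left-weighted -/
  rigid : g.LeftWeighted a a
  /-- two consecutive factors are `b⁻¹Δ` and `τ(b⁻¹)Δ` -/
  consecutive : ∃ l₁ l₂ : List G,
    l = l₁ ++ [b⁻¹ * g.Δ, (g.Δ⁻¹ * b⁻¹ * g.Δ) * g.Δ] ++ l₂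
  /-- `sup(x)` is a multiple of `o(G)`, i.e. `Δ^{sup x}` is central -/
  delta_pow_central : g.Δ ^ (l.length : ℤ) ∈ Subgroup.center G

/-- `lam` is the projection `λ(v) = −max{k : x ⋠ ` distinguished rep of `x^k·v}` of the
vertex `v` to the axis of `x`. -/
def GarsideStructure.IsAxisProj {G : Type*} [Group G] (g : GarsideStructure G) (x : G)
    (v : G ⧸ Subgroup.zpowers g.Δ) (lam : ℤ) : Prop :=
  (∃ d : G, g.IsInf d 0 ∧ (d : G ⧸ Subgroup.zpowers g.Δ) = x ^ (-lam) • v ∧ ¬ g.le x d) ∧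
  ∀ k : ℤ, (∃ d : G, g.IsInf d 0 ∧ (d : G ⧸ Subgroup.zpowers g.Δ) = x ^ k • v ∧ ¬ g.le x d) →
    k ≤ -lam

/-- the vertices of the preferred path starting at the vertex of `d`, with edge labels `L` -/
def GarsideStructure.pathVerts {G : Type*} [Group G] (g : GarsideStructure G) (d : G)
    (L : List G) : List (G ⧸ Subgroup.zpowers g.Δ) :=
  (List.range (L.length + 1)).map fun i => ((d * (L.take i).prod : G) : G ⧸ Subgroup.zpowers g.Δ)

end Artin

/-!
If `G ⧸ Z(G)` were virtually cyclic, then for two standard generators `σᵢ, σⱼ` with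
`mᵢⱼ ≥ 3` some element `σᵢ^(2p) σⱼ^(-2q)` with `(p, q) ≠ 0` would be central. To rule this out,
send `σₖ ↦ (δ_{sₖ}, sₖ)` in `ℤ^W ⋊ W`, where `W` acts on `ℤ^W` by conjugating the index and the
`sₖ` are the reflections of the geometric representation of the Coxeter group. The braid
relations survive because both alternating words of length `mₖₗ` pass through the same reflections
`(sₖ sₗ)^r sₖ`, in opposite orders. Even powers of generators land in `ℤ^W`, and a central element
of `ℤ^W` is invariant under conjugation by `sᵢ` and `sⱼ`; as `sᵢ sⱼ ≠ sⱼ sᵢ`, the conjugates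
`sᵢ sⱼ sᵢ` and `sⱼ sᵢ sⱼ` lie outside `{sᵢ, sⱼ}`, which forces `p = q = 0`.
-/

open Finset Real Polynomial.Chebyshev

theorem Subgroup.exists_zpow_eq_zpow_of_isCyclic {Q : Type*} [Group Q] (H : Subgroup Q)
    [H.FiniteIndex] [IsCyclic H] (x y : Q) : ∃ p q : ℤ, (p ≠ 0 ∨ q ≠ 0) ∧ x ^ p = y ^ q := by
  obtain ⟨m, hm, -, hxm⟩ := H.exists_pow_mem_of_index_ne_zero FiniteIndex.index_ne_zero x
  obtain ⟨n, hn, -, hyn⟩ := H.exists_pow_mem_of_index_ne_zero FiniteIndex.index_ne_zero y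
  obtain ⟨g, hg⟩ := IsCyclic.exists_generator (α := H)
  obtain ⟨u, hu⟩ := mem_zpowers_iff.mp (hg ⟨x ^ m, hxm⟩)
  obtain ⟨v, hv⟩ := mem_zpowers_iff.mp (hg ⟨y ^ n, hyn⟩)
  replace hu : (g : Q) ^ u = x ^ m := congr_arg Subtype.val hu
  replace hv : (g : Q) ^ v = y ^ n := congr_arg Subtype.val hv
  by_cases hu0 : u = 0
  · refine ⟨m, 0, Or.inl (by omega), ?_⟩
    rw [zpow_natCast, ← hu, hu0, zpow_zero, zpow_zero]
  · refine ⟨m * v, n * u, Or.inr (by positivity), ?_⟩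
    rw [zpow_mul, zpow_mul, zpow_natCast, zpow_natCast, ← hu, ← hv, ← zpow_mul, ← zpow_mul,
      mul_comm]

def alternatingProd {T : Type*} [Monoid T] (x y : T) : ℕ → T
  | 0 => 1
  | n + 1 => x * alternatingProd y x n

theorem FreeGroup.lift_braidWord {B T : Type*} [Group T] (f : B → T) (i j : B) (n : ℕ) :
    FreeGroup.lift f (braidWord i j n) = alternatingProd (f i) (f j) n := by
  induction n generalizing i j with
  | zero => simp [braidWord, alternatingProd]
  | succ n ih => simp [braidWord, alternatingProd, ih]

section Involutions

variable {W : Type*} [Group W] {a b : W}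

theorem alternatingProd_mul_inv_alternatingProd (ha : a * a = 1) (hb : b * b = 1) (n : ℕ) :
    alternatingProd a b n * (alternatingProd b a n)⁻¹ = (a * b) ^ n := by
  induction n generalizing a b with
  | zero => simp [alternatingProd]
  | succ n ih =>
    rw [alternatingProd, alternatingProd, mul_inv_rev, inv_eq_of_mul_eq_one_left hb,
      ← mul_assoc, mul_assoc a, ih hb ha, ← mul_pow_mul, pow_succ, mul_assoc]

theorem alternatingProd_comm_of_pow_eq_one (ha : a * a = 1) (hb : b * b = 1) {n : ℕ}
    (h : (a * b) ^ n = 1) : alternatingProd a b n = alternatingProd b a n := by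
  rw [← mul_inv_eq_one, alternatingProd_mul_inv_alternatingProd ha hb, h]

theorem pow_mul_eq_pow_mul_of_pow_eq_one (ha : a * a = 1) (hb : b * b = 1) {n r : ℕ}
    (h : (a * b) ^ n = 1) (hr : r < n) : (a * b) ^ r * a = (b * a) ^ (n - 1 - r) * b := by
  have hinv : (b * a)⁻¹ = a * b := by
    rw [mul_inv_rev, inv_eq_of_mul_eq_one_left ha, inv_eq_of_mul_eq_one_left hb]
  rw [← mul_inv_eq_one, mul_inv_rev, inv_eq_of_mul_eq_one_left hb, ← inv_pow, hinv, mul_assoc,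
    ← mul_assoc a, ← pow_succ', ← pow_add, show r + (n - 1 - r + 1) = n by omega, h]

end Involutions

section IntConjSemidirect

variable {W : Type*} [Group W]

def conjArrow : W →* MulAut (W → Multiplicative ℤ) :=
  mulAutArrow.comp ConjAct.toConjAct.toMonoidHom

theorem conjArrow_apply (w : W) (F : W → Multiplicative ℤ) (x : W) :
    conjArrow w F x = F (w⁻¹ * x * w) := by
  show F ((ConjAct.toConjAct w)⁻¹ • x) = _
  simp [ConjAct.smul_def]

theorem conjArrow_mulSingle [DecidableEq W] (w x : W) (v : Multiplicative ℤ) :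
    conjArrow w (Pi.mulSingle x v) = Pi.mulSingle (w * x * w⁻¹) v := by
  ext y
  rw [conjArrow_apply]
  simp only [Pi.mulSingle_apply]
  refine if_congr ?_ rfl rfl
  constructor <;> rintro rfl <;> group

abbrev IntConjSemidirect (W : Type*) [Group W] := (W → Multiplicative ℤ) ⋊[conjArrow] W

namespace IntConjSemidirect

variable [DecidableEq W]

def of (w : W) : IntConjSemidirect W := ⟨Pi.mulSingle w (.ofAdd 1), w⟩

variable {a b : W}

theorem alternatingProd_of (ha : a * a = 1) (hb : b * b = 1) (n : ℕ) :
    alternatingProd (of a) (of b) n =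
      ⟨∏ r ∈ range n, Pi.mulSingle ((a * b) ^ r * a) (.ofAdd 1),
        alternatingProd a b n⟩ := by
  induction n generalizing a b with
  | zero => rfl
  | succ n ih =>
    rw [alternatingProd, ih hb ha, of, SemidirectProduct.mul_def]
    congr 1
    rw [map_prod, prod_range_succ', pow_zero, one_mul, mul_comm]
    congr 1
    refine prod_congr rfl fun r _ => ?_
    rw [conjArrow_mulSingle, inv_eq_of_mul_eq_one_left ha, ← mul_assoc a, ← mul_pow_mul,
      pow_succ]
    simp only [mul_assoc]

theorem alternatingProd_of_comm (ha : a * a = 1) (hb : b * b = 1) {n : ℕ}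
    (h : (a * b) ^ n = 1) : alternatingProd (of a) (of b) n = alternatingProd (of b) (of a) n := by
  rw [alternatingProd_of ha hb, alternatingProd_of hb ha,
    alternatingProd_comm_of_pow_eq_one ha hb h]
  conv_rhs => rw [← prod_range_reflect]
  congr 1
  refine prod_congr rfl fun r hr => ?_
  rw [pow_mul_eq_pow_mul_of_pow_eq_one ha hb h (mem_range.mp hr)]

theorem of_zpow_two_mul (ha : a * a = 1) (t : ℤ) :
    of a ^ (2 * t) = SemidirectProduct.inl (Pi.mulSingle a (.ofAdd (2 * t))) := by
  have hsq : of a ^ 2 = SemidirectProduct.inl (Pi.mulSingle a (.ofAdd 2)) := by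
    ext : 1
    · rw [sq, SemidirectProduct.mul_left, SemidirectProduct.left_inl, of, conjArrow_mulSingle,
        mul_inv_cancel_right, ← Pi.mulSingle_mul, ← ofAdd_add, one_add_one_eq_two]
    · simp [sq, of, ha]
  rw [zpow_mul, zpow_ofNat, hsq, ← map_zpow, ← Pi.mulSingle_zpow, ← ofAdd_zsmul, smul_eq_mul,
    mul_comm]

theorem apply_conj_eq_of_commute {w : W} {F : W → Multiplicative ℤ}
    (h : Commute (of w) (SemidirectProduct.inl F)) (x : W) : F (w⁻¹ * x * w) = F x := by
  have := congr_arg SemidirectProduct.left h.eq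
  simp only [of, SemidirectProduct.mul_def, SemidirectProduct.left_inl,
    SemidirectProduct.right_inl, map_one, MulAut.one_apply] at this
  have hF : conjArrow w F = F := mul_left_cancel (this.trans (mul_comm _ _))
  rw [← conjArrow_apply w F x, hF]

theorem eq_zero_of_commute (hab : a * b ≠ b * a) {p q : ℤ}
    (h : Commute (of a)
      (SemidirectProduct.inl (Pi.mulSingle a (.ofAdd p) * Pi.mulSingle b (.ofAdd q)))) :
    q = 0 := by
  have hne : a ≠ b := by rintro rfl; exact hab rfl
  have hconj_ne_left : a⁻¹ * b * a ≠ a := fun h => hne (by simpa [inv_mul_eq_one] using h)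
  have hconj_ne_right : a⁻¹ * b * a ≠ b := fun h => hab <|
    calc a * b = a * (a⁻¹ * b * a) := by rw [h]
      _ = b * a := by group
  have := apply_conj_eq_of_commute h b
  simp only [Pi.mul_apply, Pi.mulSingle_eq_of_ne hconj_ne_left, Pi.mulSingle_eq_of_ne hconj_ne_right,
    Pi.mulSingle_eq_of_ne hne.symm, Pi.mulSingle_eq_same, mul_one, one_mul] at this
  exact ofAdd_eq_one.mp this.symm

end IntConjSemidirect

end IntConjSemidirect

theorem Polynomial.Chebyshev.S_sub_one_eval_two_mul_cos_pi_div (k : ℕ) (hk : 2 ≤ k) :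
    (S ℝ ((k : ℤ) - 1)).eval (2 * cos (π / k)) = 0 := by
  have hsin : sin (π / k) ≠ 0 :=
    (sin_pos_of_pos_of_lt_pi (by positivity) (div_lt_self pi_pos (by exact_mod_cast hk))).ne'
  have h := S_two_mul_real_cos (π / k) ((k : ℤ) - 1)
  rw [show (((k : ℤ) - 1 : ℤ) : ℝ) + 1 = k by push_cast; ring,
    mul_div_cancel₀ _ (by positivity), sin_pi] at h
  exact (mul_eq_zero.mp h).resolve_right hsin

theorem Polynomial.Chebyshev.S_add_S_sub_one_eval_two_mul_cos_two_pi_div (k : ℕ) (hk : 1 ≤ k) :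
    (S ℝ k).eval (2 * cos (2 * π / (2 * k + 1))) +
      (S ℝ ((k : ℤ) - 1)).eval (2 * cos (2 * π / (2 * k + 1))) = 0 := by
  set θ := 2 * π / (2 * k + 1) with hθ
  have hsin : sin θ ≠ 0 := by
    have : (1 : ℝ) ≤ k := by exact_mod_cast hk
    refine (sin_pos_of_pos_of_lt_pi (by positivity) ?_).ne'
    rw [hθ, div_lt_iff₀ (by positivity)]
    nlinarith [pi_pos]
  have h1 := S_two_mul_real_cos θ k
  have h2 := S_two_mul_real_cos θ ((k : ℤ) - 1)
  have hsupp : (k + 1) * θ = 2 * π - k * θ := by rw [hθ]; field_simp; ring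
  push_cast at h1 h2
  rw [hsupp, sin_two_pi_sub] at h1
  rw [sub_add_cancel] at h2
  apply (mul_eq_zero.mp _).resolve_right hsin
  rw [add_mul, h1, h2]
  ring

namespace Module

variable {V : Type*} [AddCommGroup V] [Module ℝ V] {x y : V} {f g : Dual ℝ V}

theorem reflection_mul_reflection_pow_eq_one (hf : f x = 2) (hg : g y = 2) {m : ℕ}
    (hm : 3 ≤ m) (hfg : f y * g x = 4 * cos (π / m) ^ 2) :
    (reflection hf * reflection hg) ^ m = 1 := by
  have ht : 2 * cos (2 * π / m) = f y * g x - 2 := by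
    rw [hfg, mul_div_assoc, cos_two_mul]; ring
  ext z
  rw [reflection_mul_reflection_pow_apply hf hg m z _ ht, LinearEquiv.coe_one, id]
  obtain ⟨k, rfl | rfl⟩ := Nat.even_or_odd' m
  · have h0 := S_sub_one_eval_two_mul_cos_pi_div k (by omega)
    rw [show (((2 * k : ℕ) : ℤ) - 2) / 2 = (k : ℤ) - 1 by omega,
      show (((2 * k : ℕ) : ℤ) - 1) / 2 = (k : ℤ) - 1 by omega]
    push_cast
    rw [mul_div_mul_left _ _ two_ne_zero, h0]
    simp
  · have h0 := S_add_S_sub_one_eval_two_mul_cos_two_pi_div k (by omega)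
    rw [show (((2 * k + 1 : ℕ) : ℤ) - 2) / 2 = (k : ℤ) - 1 by omega,
      show (((2 * k + 1 : ℕ) : ℤ) - 1) / 2 = k by omega,
      show (((2 * k + 1 : ℕ) : ℤ) - 3) / 2 = (k : ℤ) - 1 by omega,
      show ((2 * k + 1 : ℕ) : ℤ) / 2 = k by omega]
    push_cast
    rw [h0]
    simp

theorem reflection_mul_reflection_sq_eq_one (hf : f x = 2) (hg : g y = 2) (hfy : f y = 0)
    (hgx : g x = 0) : (reflection hf * reflection hg) ^ 2 = 1 := by
  ext z
  simp only [sq, LinearEquiv.mul_apply, LinearEquiv.coe_one, id, reflection_apply, map_sub,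
    map_smul, hf, hg, hfy, hgx]
  module

end Module

namespace CoxeterMatrix

variable {B : Type*} (M : CoxeterMatrix B)

/-- For `M k l = 0` (`mₖₗ = ∞`), Lean's `π / 0 = 0` yields the customary value `-2`. -/
noncomputable def geometricCoroot (k : B) : Module.Dual ℝ (B →₀ ℝ) :=
  Finsupp.linearCombination ℝ fun l => -2 * cos (π / M k l)

theorem geometricCoroot_single (k l : B) :
    M.geometricCoroot k (Finsupp.single l 1) = -2 * cos (π / M k l) := by
  simp [geometricCoroot]

theorem geometricCoroot_single_self (k : B) :
    M.geometricCoroot k (Finsupp.single k 1) = 2 := by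
  simp [geometricCoroot_single]

noncomputable def geometricReflection (k : B) : (B →₀ ℝ) ≃ₗ[ℝ] (B →₀ ℝ) :=
  Module.reflection (M.geometricCoroot_single_self k)

theorem isLiftable_geometricReflection : M.IsLiftable M.geometricReflection := by
  intro k l
  obtain rfl | hkl := eq_or_ne k l
  · rw [M.diagonal, pow_one]
    ext z : 1
    rw [LinearEquiv.mul_apply, geometricReflection, Module.involutive_reflection]
    rfl
  have hsymm : M.geometricCoroot l (Finsupp.single k 1) =
      M.geometricCoroot k (Finsupp.single l 1) := by
    rw [geometricCoroot_single, geometricCoroot_single, M.symmetric]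
  obtain h0 | h2 | h3 : M k l = 0 ∨ M k l = 2 ∨ 3 ≤ M k l := by
    have := M.off_diagonal k l hkl
    omega
  · rw [h0, pow_zero]
  · have hc : M.geometricCoroot k (Finsupp.single l 1) = 0 := by
      rw [geometricCoroot_single, h2]; norm_num
    rw [h2]
    exact Module.reflection_mul_reflection_sq_eq_one _ _ hc (hsymm.trans hc)
  · refine Module.reflection_mul_reflection_pow_eq_one _ _ h3 ?_
    rw [hsymm, geometricCoroot_single]
    ring

theorem geometricReflection_mul_ne_mul {i j : B} (hm : 3 ≤ M i j) :
    M.geometricReflection i * M.geometricReflection j ≠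
      M.geometricReflection j * M.geometricReflection i := by
  have hij : i ≠ j := by rintro rfl; simp at hm
  have hcos : 0 < cos (π / M j i) := by
    have h3 : (3 : ℝ) ≤ M j i := by rw [M.symmetric]; exact_mod_cast hm
    have hpos : 0 < π / M j i := div_pos pi_pos (by linarith)
    refine cos_pos_of_mem_Ioo ⟨by linarith [pi_pos], ?_⟩
    rw [div_lt_iff₀ (by linarith)]
    nlinarith [pi_pos]
  intro h
  have hj : 2 * cos (π / M j i) = -(2 * cos (π / M j i)) := by
    simpa [geometricReflection, Module.reflection_apply, geometricCoroot_single, hij.symm] using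
      congr($h (Finsupp.single i 1) j)
  linarith

end CoxeterMatrix

section Artin

variable {B : Type*} {W : Type*} [Group W] {f : B → W}

theorem CoxeterMatrix.IsLiftable.mul_self_eq_one {M : CoxeterMatrix B} (hf : M.IsLiftable f)
    (k : B) : f k * f k = 1 := by
  simpa using hf k k

variable [DecidableEq W] (M : CoxeterMatrix B)

def ArtinGroup.toIntConjSemidirect (hf : M.IsLiftable f) : ArtinGroup M →* IntConjSemidirect W :=
  PresentedGroup.toGroup (f := fun k => IntConjSemidirect.of (f k)) <| by
    rintro r ⟨i, j, -, rfl⟩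
    rw [map_mul, map_inv, FreeGroup.lift_braidWord, FreeGroup.lift_braidWord, mul_inv_eq_one]
    exact IntConjSemidirect.alternatingProd_of_comm (hf.mul_self_eq_one i) (hf.mul_self_eq_one j)
      (hf i j)

theorem ArtinGroup.toIntConjSemidirect_of (hf : M.IsLiftable f) (k : B) :
    ArtinGroup.toIntConjSemidirect M hf (PresentedGroup.of k) = IntConjSemidirect.of (f k) :=
  PresentedGroup.toGroup.of _

theorem ArtinGroup.eq_zero_of_zpow_two_mul_eq_mod_center (hf : M.IsLiftable f) {i j : B}
    (hij : f i * f j ≠ f j * f i) {p q : ℤ}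
    (h : ((PresentedGroup.of i : ArtinGroup M) : ArtinGroup M ⧸ Subgroup.center (ArtinGroup M)) ^
      (2 * p) = ((PresentedGroup.of j : ArtinGroup M) : ArtinGroup M ⧸ _) ^ (2 * q)) :
    p = 0 ∧ q = 0 := by
  set φ := ArtinGroup.toIntConjSemidirect M hf
  set z := (PresentedGroup.of i ^ (2 * p))⁻¹ * PresentedGroup.of j ^ (2 * q) with hz_def
  have hz : z ∈ Subgroup.center (ArtinGroup M) := by
    rw [← QuotientGroup.eq, QuotientGroup.mk_zpow, QuotientGroup.mk_zpow, h]
  have hφz : φ z = SemidirectProduct.inl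
      (Pi.mulSingle (f i) (.ofAdd (-(2 * p))) * Pi.mulSingle (f j) (.ofAdd (2 * q))) := by
    rw [hz_def, map_mul, map_inv, map_zpow, map_zpow, toIntConjSemidirect_of,
      toIntConjSemidirect_of, IntConjSemidirect.of_zpow_two_mul (hf.mul_self_eq_one i),
      IntConjSemidirect.of_zpow_two_mul (hf.mul_self_eq_one j), ← map_inv, ← map_mul,
      ← Pi.mulSingle_inv, ofAdd_neg]
  have hcomm (k : B) : Commute (IntConjSemidirect.of (f k)) (φ z) := by
    rw [← toIntConjSemidirect_of M hf]
    exact Commute.map (Subgroup.mem_center_iff.mp hz _) _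
  have hq := IntConjSemidirect.eq_zero_of_commute hij (hφz ▸ hcomm i)
  have hp : -(2 * p) = 0 := by
    refine IntConjSemidirect.eq_zero_of_commute hij.symm (p := 2 * q) ?_
    rw [mul_comm, ← hφz]
    exact hcomm j
  omega

end Artin

theorem artin_mod_center_not_virtually_cyclic_general {B : Type*} (M : CoxeterMatrix B)
    (hedge : M.HasEdge) :
    ¬ ∃ H : Subgroup (ArtinGroup M ⧸ Subgroup.center (ArtinGroup M)),
        H.FiniteIndex ∧ IsCyclic H := by
  rintro ⟨H, _, _⟩
  obtain ⟨i, j, -, hm⟩ := hedge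
  obtain ⟨p, q, hpq, h⟩ := H.exists_zpow_eq_zpow_of_isCyclic
    ((PresentedGroup.of i : ArtinGroup M) : ArtinGroup M ⧸ _) (PresentedGroup.of j : ArtinGroup M)
  classical
  have := ArtinGroup.eq_zero_of_zpow_two_mul_eq_mod_center M M.isLiftable_geometricReflection
    (M.geometricReflection_mul_ne_mul hm) (p := p) (q := q)
    (by rw [mul_comm 2 p, mul_comm 2 q, zpow_mul, zpow_mul, h])
  omega

/-- If `G` is an irreducible Artin–Tits group of spherical type, then `G/Z(G)` is not
virtually cyclic. -/
theorem artin_mod_center_not_virtually_cyclic {B : Type*} (M : CoxeterMatrix B)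
    (hirr : M.IsIrreducible) (hsph : M.IsSpherical) (hedge : M.HasEdge) :
    ¬ ∃ H : Subgroup (ArtinGroup M ⧸ Subgroup.center (ArtinGroup M)),
        H.FiniteIndex ∧ IsCyclic H :=
  artin_mod_center_not_virtually_cyclic_general M hedge
end
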